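/- arXiv:2102.03015 — 4 statements merged into one kernel-verified Lean document; each statement's English description precedes it below -/
import Mathlib

section
/- Let g, n, N, t, u be positive integers with N = g·n·u, g ≥ t+1, n ≥ t+1, u ≥ 1. For every integer k with 0 ≤ k ≤ t, ∑_{l=0}^{n} (-1)^l · [C(n,l) / (2^{n-1} · C(N, g·l))] · C(N - t, g·l - k) = 0. -/
/-!
Writing `m = g l`, the identity `C(N-t, m-k) · N^{(t)} = C(N, m) · m^{(k)} · (N-m)^{(t-k)}`
(falling factorials) shows that the `l`-th coefficient of the sum is a polynomial of degree at
most `t < n` in `l`. The alternating binomial sum `∑ (-1)^l C(n,l) p(l)` is, up to sign, the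
`n`-th forward difference of `p` at `0`, which vanishes for `deg p < n`.
-/

open Finset Polynomial

/-- Binomial coefficient with an integer lower argument, equal to 0 for negative arguments. -/
def chooseZ (n : ℕ) (k : ℤ) : ℕ := if 0 ≤ k then n.choose k.toNat else 0

theorem Polynomial.sum_range_neg_one_pow_mul_choose_mul_eval_eq_zero {R : Type*} [CommRing R]
    {P : R[X]} {n : ℕ} (hP : P.natDegree < n) :
    ∑ l ∈ range (n + 1), (-1 : R) ^ l * n.choose l * P.eval (l : R) = 0 := by
  have hΔ := fwdDiff_iter_eq_sum_shift 1 P.eval n 0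
  rw [fwdDiff_iter_eq_zero_of_degree_lt hP] at hΔ
  have hterm : ∀ l ∈ range (n + 1), (-1 : R) ^ l * n.choose l * P.eval (l : R) =
      (-1) ^ n * (((-1 : ℤ) ^ (n - l) * n.choose l) • P.eval (0 + l • (1 : R))) := by
    intro l hl
    obtain ⟨j, rfl⟩ := Nat.exists_eq_add_of_le (Nat.lt_succ_iff.mp (mem_range.mp hl))
    rw [Nat.add_sub_cancel_left, zero_add, nsmul_one, zsmul_eq_mul]
    push_cast
    ring_nf
    simp
  rw [sum_congr rfl hterm, ← mul_sum, ← hΔ, Pi.zero_apply, mul_zero]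

open Nat in
theorem Nat.add_choose_mul_descFactorial (k a b c : ℕ) :
    (b + c).choose b * (k + a + b + c).descFactorial (k + a) =
      (k + a + b + c).choose (k + b) * ((k + b).descFactorial k * (a + c).descFactorial a) := by
  have hchoose : ∀ i j : ℕ, (i + j).choose i * i ! * j ! = (i + j)! := fun i j => by
    simpa using choose_mul_factorial_mul_factorial (le_add_right i j)
  have hdesc : ∀ i j : ℕ, (i + j).descFactorial i * j ! = (i + j)! := fun i j => by
    simpa [mul_comm] using factorial_mul_descFactorial (le_add_right i j)
  apply Nat.eq_of_mul_eq_mul_right (Nat.mul_pos (factorial_pos b) (factorial_pos c))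
  calc _ = (k + a + (b + c)).descFactorial (k + a) * ((b + c).choose b * b ! * c !) := by ring_nf
    _ = (k + a + b + c)! := by rw [hchoose, hdesc]; ring_nf
    _ = (k + b + (a + c)).choose (k + b) * (k + b)! * (a + c)! := by rw [hchoose]; ring_nf
    _ = _ := by rw [← hdesc k b, ← hdesc a c]; ring_nf

theorem chooseZ_sub_mul_descFactorial {N t k m : ℕ} (hkt : k ≤ t) (htN : t ≤ N) (hmN : m ≤ N) :
    chooseZ (N - t) ((m : ℤ) - k) * N.descFactorial t =
      N.choose m * (m.descFactorial k * (N - m).descFactorial (t - k)) := by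
  rcases lt_or_ge m k with hmk | hkm
  · simp [chooseZ, Nat.descFactorial_eq_zero_iff_lt.mpr hmk, hmk]
  obtain ⟨b, rfl⟩ := Nat.exists_eq_add_of_le hkm
  obtain ⟨a, rfl⟩ := Nat.exists_eq_add_of_le hkt
  have hchooseZ : chooseZ (N - (k + a)) (((k + b : ℕ) : ℤ) - k) = (N - (k + a)).choose b := by
    simp [chooseZ]
  rw [hchooseZ]
  rcases lt_or_ge (N - (k + a)) b with hlt | hle
  · have : N - (k + b) < a := by omega
    simp [Nat.choose_eq_zero_of_lt hlt, Nat.descFactorial_eq_zero_iff_lt.mpr this]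
  obtain ⟨c, rfl⟩ : ∃ c, N = k + a + b + c := ⟨N - (k + a + b), by omega⟩
  have hNt : k + a + b + c - (k + a) = b + c := by omega
  have hNm : k + a + b + c - (k + b) = a + c := by omega
  rw [hNt, hNm, Nat.add_sub_cancel_left]
  exact Nat.add_choose_mul_descFactorial k a b c

theorem exists_natDegree_le_chooseZ_div_choose_eq_eval {N t k : ℕ} (hkt : k ≤ t) (htN : t ≤ N) :
    ∃ P : ℚ[X], P.natDegree ≤ t ∧ ∀ m ≤ N,
      (chooseZ (N - t) ((m : ℤ) - k) : ℚ) / N.choose m = P.eval (m : ℚ) := by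
  refine ⟨C (N.descFactorial t : ℚ)⁻¹ *
    (descPochhammer ℚ k * (descPochhammer ℚ (t - k)).comp (C (N : ℚ) - X)), ?_, fun m hmN => ?_⟩
  · refine (natDegree_C_mul_le _ _).trans (natDegree_mul_le.trans ?_)
    have hcomp := natDegree_comp_le (p := descPochhammer ℚ (t - k)) (q := C (N : ℚ) - X)
    have hX : (C (N : ℚ) - X).natDegree = 1 := by
      rw [natDegree_sub_eq_right_of_natDegree_lt] <;> simp
    simp only [descPochhammer_natDegree, hX, mul_one] at hcomp ⊢
    omega
  · have hchoose : (N.choose m : ℚ) ≠ 0 := by exact_mod_cast (Nat.choose_pos hmN).ne'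
    have hdesc : (N.descFactorial t : ℚ) ≠ 0 := by
      exact_mod_cast (Nat.descFactorial_pos.mpr htN).ne'
    have key := congrArg (Nat.cast (R := ℚ)) (chooseZ_sub_mul_descFactorial hkt htN hmN)
    simp only [eval_mul, eval_C, eval_comp, eval_sub, eval_X, ← Nat.cast_sub hmN,
      descPochhammer_eval_eq_descFactorial]
    field_simp
    rw [← mul_assoc] at key
    exact_mod_cast key

theorem pi_code_D2_general (g n N t u : ℕ) (hg : 0 < g) (hu : 0 < u)
    (hN : N = g * n * u) (hnt : t + 1 ≤ n) (k : ℕ) (hk : k ≤ t) :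
    ∑ l ∈ Finset.range (n + 1),
      (-1 : ℚ) ^ l * ((n.choose l : ℚ) / (2 ^ (n - 1) * (N.choose (g * l) : ℚ))) *
        (chooseZ (N - t) ((g * l : ℤ) - (k : ℤ)) : ℚ) = 0 := by
  have hlN : ∀ l ≤ n, g * l ≤ N := fun l hl => by
    rw [hN]; exact (Nat.mul_le_mul_left g hl).trans (Nat.le_mul_of_pos_right _ hu)
  have htN : t ≤ N := by nlinarith [hlN n le_rfl]
  obtain ⟨P, hPdeg, hP⟩ := exists_natDegree_le_chooseZ_div_choose_eq_eval hk htN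
  have hQdeg : (P.comp (C (g : ℚ) * X)).natDegree < n := by
    refine natDegree_comp_le.trans_lt ?_
    have : (C (g : ℚ) * X).natDegree ≤ 1 := (natDegree_C_mul_le _ _).trans natDegree_X_le
    nlinarith
  calc
    _ = (2 ^ (n - 1) : ℚ)⁻¹ * ∑ l ∈ range (n + 1),
          (-1 : ℚ) ^ l * n.choose l * (P.comp (C (g : ℚ) * X)).eval (l : ℚ) := by
      rw [mul_sum]
      refine sum_congr rfl fun l hl => ?_
      have hl := hP (g * l) (hlN l (Nat.lt_succ_iff.mp (mem_range.mp hl)))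
      push_cast at hl
      rw [eval_comp, eval_mul, eval_C, eval_X, ← hl]
      ring
    _ = 0 := by rw [sum_range_neg_one_pow_mul_choose_mul_eval_eq_zero hQdeg, mul_zero]

theorem pi_code_D2 (g n N t u : ℕ) (hg : 0 < g) (hn : 0 < n) (ht : 0 < t) (hu : 0 < u)
    (hN : N = g * n * u) (hgt : t + 1 ≤ g) (hnt : t + 1 ≤ n) (k : ℕ) (hk : k ≤ t) :
    ∑ l ∈ Finset.range (n + 1),
      (-1 : ℚ) ^ l * ((n.choose l : ℚ) / (2 ^ (n - 1) * (N.choose (g * l) : ℚ))) *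
        (chooseZ (N - t) ((g * l : ℤ) - (k : ℤ)) : ℚ) = 0 :=
  pi_code_D2_general g n N t u hg hu hN hnt k hk
end

section
/- Let N ≥ 2 and let A, B ⊆ {0,...,N} be nonempty sets such that: (i) w ∈ A implies N−w ∈ A, (ii) w ∈ B implies N−w ∈ B, and (iii) any two distinct elements of A ∪ B differ by more than 1. Then for each k ∈ {0,1}, ∑_{w ∈ A} C(N−1, w−k) / ∑_{w' ∈ A} C(N, w') = 1/2, and similarly for B. -/
open Finset

lemma chooseZ_natCast (n w : ℕ) : chooseZ n w = n.choose w := by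
  simp [chooseZ]

lemma chooseZ_natCast_add_one_sub_one (n m : ℕ) :
    chooseZ n (((m + 1 : ℕ) : ℤ) - 1) = n.choose m := by
  simp [chooseZ]

lemma choose_succ_eq_chooseZ_add_chooseZ_sub_one (n w : ℕ) :
    (n + 1).choose w = chooseZ n w + chooseZ n ((w : ℤ) - 1) := by
  cases w with
  | zero => simp [chooseZ]
  | succ m => rw [chooseZ_natCast, chooseZ_natCast_add_one_sub_one, Nat.choose_succ_succ, add_comm]

lemma chooseZ_sub_one_eq_chooseZ_reflect (n w : ℕ) (hw : w ≤ n + 1) :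
    chooseZ n ((w : ℤ) - 1) = chooseZ n (n + 1 - w : ℕ) := by
  rw [chooseZ_natCast]
  cases w with
  | zero => simp [chooseZ]
  | succ m =>
    rw [chooseZ_natCast_add_one_sub_one, Nat.add_sub_add_right, Nat.choose_symm (by omega)]

lemma sum_chooseZ_sub_one_eq_sum_chooseZ {n : ℕ} {A : Finset ℕ} (hsub : A ⊆ range (n + 2))
    (hsym : ∀ w ∈ A, n + 1 - w ∈ A) :
    ∑ w ∈ A, chooseZ n ((w : ℤ) - 1) = ∑ w ∈ A, chooseZ n w := by
  have hle : ∀ w ∈ A, w ≤ n + 1 := fun w hw => Nat.lt_succ_iff.mp (mem_range.mp (hsub hw))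
  refine sum_nbij' (fun w => n + 1 - w) (fun w => n + 1 - w) hsym hsym
    (fun w hw => Nat.sub_sub_self (hle w hw)) (fun w hw => Nat.sub_sub_self (hle w hw))
    (fun w hw => chooseZ_sub_one_eq_chooseZ_reflect n w (hle w hw))

theorem sum_chooseZ_div_sum_choose_eq_half {n : ℕ} {A : Finset ℕ} (hsub : A ⊆ range (n + 2))
    (hne : A.Nonempty) (hsym : ∀ w ∈ A, n + 1 - w ∈ A) {k : ℕ} (hk : k ≤ 1) :
    (∑ w ∈ A, (chooseZ n ((w : ℤ) - k) : ℚ)) / ∑ w ∈ A, ((n + 1).choose w : ℚ) = 1 / 2 := by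
  have hS : ∑ w ∈ A, chooseZ n ((w : ℤ) - k) = ∑ w ∈ A, chooseZ n w := by
    interval_cases k
    · simp
    · exact_mod_cast sum_chooseZ_sub_one_eq_sum_chooseZ hsub hsym
  have hD : ∑ w ∈ A, (n + 1).choose w = 2 * ∑ w ∈ A, chooseZ n w := by
    simp_rw [choose_succ_eq_chooseZ_add_chooseZ_sub_one, sum_add_distrib,
      sum_chooseZ_sub_one_eq_sum_chooseZ hsub hsym, two_mul]
  have hpos : 0 < ∑ w ∈ A, (n + 1).choose w :=
    sum_pos (fun w hw => Nat.choose_pos (Nat.lt_succ_iff.mp (mem_range.mp (hsub hw)))) hne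
  rw [div_eq_iff (by exact_mod_cast hpos.ne'), ← Nat.cast_sum, ← Nat.cast_sum, hS, hD]
  push_cast
  ring

theorem shibayama_D2_general (N : ℕ) (hN : 2 ≤ N) (A B : Finset ℕ)
    (hAsub : A ⊆ Finset.range (N + 1)) (hBsub : B ⊆ Finset.range (N + 1))
    (hA : A.Nonempty) (hB : B.Nonempty)
    (hAsym : ∀ w ∈ A, N - w ∈ A) (hBsym : ∀ w ∈ B, N - w ∈ B) :
    ∀ k ∈ ({0, 1} : Finset ℕ),
      (∑ w ∈ A, (chooseZ (N - 1) ((w : ℤ) - (k : ℤ)) : ℚ)) /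
          (∑ w' ∈ A, (N.choose w' : ℚ)) = 1 / 2 ∧
      (∑ w ∈ B, (chooseZ (N - 1) ((w : ℤ) - (k : ℤ)) : ℚ)) /
          (∑ w' ∈ B, (N.choose w' : ℚ)) = 1 / 2 := by
  obtain ⟨n, rfl⟩ : ∃ n, N = n + 1 := ⟨N - 1, by omega⟩
  intro k hk
  have hk1 : k ≤ 1 := by
    simp only [mem_insert, mem_singleton] at hk
    omega
  rw [Nat.add_sub_cancel]
  exact ⟨sum_chooseZ_div_sum_choose_eq_half hAsub hA hAsym hk1,
    sum_chooseZ_div_sum_choose_eq_half hBsub hB hBsym hk1⟩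

theorem shibayama_D2 (N : ℕ) (hN : 2 ≤ N) (A B : Finset ℕ)
    (hAsub : A ⊆ Finset.range (N + 1)) (hBsub : B ⊆ Finset.range (N + 1))
    (hA : A.Nonempty) (hB : B.Nonempty)
    (hAsym : ∀ w ∈ A, N - w ∈ A) (hBsym : ∀ w ∈ B, N - w ∈ B)
    (hD3 : ∀ w₁ ∈ A ∪ B, ∀ w₂ ∈ A ∪ B, w₁ ≠ w₂ → 1 < |(w₁ : ℤ) - (w₂ : ℤ)|) :
    ∀ k ∈ ({0, 1} : Finset ℕ),
      (∑ w ∈ A, (chooseZ (N - 1) ((w : ℤ) - (k : ℤ)) : ℚ)) /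
          (∑ w' ∈ A, (N.choose w' : ℚ)) = 1 / 2 ∧
      (∑ w ∈ B, (chooseZ (N - 1) ((w : ℤ) - (k : ℤ)) : ℚ)) /
          (∑ w' ∈ B, (N.choose w' : ℚ)) = 1 / 2 :=
  shibayama_D2_general N hN A B hAsub hBsub hA hB hAsym hBsym
end

section
/- Let N ≥ 2, 1 ≤ t < N, and c : {0,...,N} → ℂ with |Ψ⟩ = ∑_{x ∈ {0,1}^N} c(wt(x))|x⟩ permutation-invariant. Tracing out the first t qubits of the rank-one operator |Ψ⟩⟨Ψ| yields the operator ∑_{k=0}^{t} C(t,k) |Ψ_k⟩⟨Ψ_k| on (ℂ²)^{⊗(N−t)}, where |Ψ_k⟩ = ∑_{x ∈ {0,1}^{N−t}} c(wt(x)+k)|x⟩. -/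
/-- Hamming weight of a bit string of length `n`. -/
def wt {n : ℕ} (x : Fin n → Bool) : ℕ := (Finset.univ.filter fun i => x i = true).card

open Finset

lemma sum_apply_wt {n : ℕ} {M : Type*} [AddCommMonoid M] (f : ℕ → M) :
    ∑ y : Fin n → Bool, f (wt y) = ∑ k ∈ range (n + 1), n.choose k • f k := by
  let support : (Fin n → Bool) ≃ Finset (Fin n) :=
    { toFun := fun y => univ.filter (y · = true)
      invFun := fun s i => decide (i ∈ s)
      left_inv := fun y => by funext i; simp
      right_inv := fun s => by ext i; simp }
  calc ∑ y : Fin n → Bool, f (wt y) = ∑ s : Finset (Fin n), f s.card :=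
        support.sum_comp (fun s => f s.card)
    _ = ∑ k ∈ range (n + 1), n.choose k • f k := by
        simpa [powerset_univ] using sum_powerset_apply_card f (x := (univ : Finset (Fin n)))

theorem partial_trace_PI_state_general (N t : ℕ) (c : ℕ → ℂ) :
    (fun (x x' : Fin (N - t) → Bool) =>
        ∑ y : Fin t → Bool, c (wt y + wt x) * star (c (wt y + wt x'))) =
      fun (x x' : Fin (N - t) → Bool) =>
        ∑ k ∈ Finset.range (t + 1), (t.choose k : ℂ) * (c (wt x + k) * star (c (wt x' + k))) := by
  funext x x'
  simp only [add_comm (wt x), add_comm (wt x'), ← nsmul_eq_mul]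
  exact sum_apply_wt fun k => c (k + wt x) * star (c (k + wt x'))

theorem partial_trace_PI_state (N t : ℕ) (hN : 2 ≤ N) (ht : 1 ≤ t) (htN : t < N) (c : ℕ → ℂ) :
    (fun (x x' : Fin (N - t) → Bool) =>
        ∑ y : Fin t → Bool, c (wt y + wt x) * star (c (wt y + wt x'))) =
      fun (x x' : Fin (N - t) → Bool) =>
        ∑ k ∈ Finset.range (t + 1), (t.choose k : ℂ) * (c (wt x + k) * star (c (wt x' + k))) :=
  partial_trace_PI_state_general N t c
end

section
/- Let N, t with 1 ≤ t < N, let A, B ⊆ {0,...,N} be disjoint nonempty sets such that distinct elements of A ∪ B differ by more than t, and let f : A ∪ B → ℂ satisfy: for all 0 ≤ k ≤ t, ∑_{w∈A} |f(w)|² C(N−t, w−k) = ∑_{w∈B} |f(w)|² C(N−t, w−k) ≠ 0. For 0 ≤ k ≤ t define vectors in (ℂ²)^{⊗(N−t)}: U₁ᵏ = ∑_{w∈A} ∑_{x: wt(x)=w−k} f(w)|x⟩ and U₂ᵏ = ∑_{w∈B} ∑_{y: wt(y)=w−k} f(w)|y⟩. Then ⟨U₁ᵏ|U₁ᵏ⟩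 = ⟨U₂ᵏ|U₂ᵏ⟩ ≠ 0, and for (k₁,b₁) ≠ (k₂,b₂) with 0 ≤ k₁,k₂ ≤ t and b₁,b₂ ∈ {1,2}, ⟨U_{b₁}^{k₁}|U_{b₂}^{k₂}⟩ = 0. -/
/-!
The vector `U_b^k` is supported on the strings `x` with `wt x + k` in `A` (for `b = 1`) or `B`
(for `b = 2`). Two distinct labels `(k₁, b₁) ≠ (k₂, b₂)` with `k₁, k₂ ≤ t` cannot share a string:
the weights `wt x + k₁`, `wt x + k₂` differ by at most `t`, so they coincide, forcing `k₁ = k₂`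
and then `b₁ ≠ b₂`, which the disjointness of `A` and `B` excludes. Hence the vectors are
orthogonal, and `‖U_b^k‖²` is the sum over `w` of `‖f w‖²` times the number `C(N - t, w - k)` of
strings of weight `w - k`.
-/

open Finset

lemma card_filter_wt_eq (n m : ℕ) : #{x : Fin n → Bool | wt x = m} = n.choose m := by
  rw [show n.choose m = #(powersetCard m (univ : Finset (Fin n))) by simp]
  refine card_nbij' (fun x => ({i | x i = true} : Finset (Fin n))) (fun s i => decide (i ∈ s))
    ?_ ?_ ?_ ?_
  · intro x hx
    rw [mem_coe, mem_filter] at hx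
    simpa [mem_powersetCard, wt] using hx.2
  · intro s hs
    rw [mem_coe, mem_powersetCard] at hs
    rw [mem_coe, mem_filter]
    simpa [wt] using hs.2
  · intro x _
    funext i
    simp
  · intro s _
    ext i
    simp

lemma card_filter_wt_add_eq (n k w : ℕ) :
    #{x : Fin n → Bool | wt x + k = w} = chooseZ n ((w : ℤ) - (k : ℤ)) := by
  by_cases hkw : k ≤ w
  · have hw : ∀ x : Fin n → Bool, wt x + k = w ↔ wt x = w - k := fun x => by omega
    simp only [hw, card_filter_wt_eq, chooseZ, if_pos (sub_nonneg.mpr (Int.ofNat_le.mpr hkw))]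
    congr
    omega
  · have hw : ∀ x : Fin n → Bool, wt x + k ≠ w := fun x => by omega
    simp [hw, chooseZ, hkw]

/-- The vector `∑_{w ∈ S} ∑_{wt x = w - k} f w |x⟩` in `(ℂ²)^{⊗ n}`. -/
noncomputable def weightVector (n k : ℕ) (S : Finset ℕ) (f : ℕ → ℂ) :
    EuclideanSpace ℂ (Fin n → Bool) :=
  WithLp.toLp 2 fun x => if wt x + k ∈ S then f (wt x + k) else 0

lemma inner_weightVector_self (n k : ℕ) (S : Finset ℕ) (f : ℕ → ℂ) :
    inner ℂ (weightVector n k S f) (weightVector n k S f) =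
      ((∑ w ∈ S, ‖f w‖ ^ 2 * (chooseZ n ((w : ℤ) - (k : ℤ)) : ℝ) : ℝ) : ℂ) := by
  rw [inner_self_eq_norm_sq_to_K, ← RCLike.ofReal_pow, EuclideanSpace.norm_sq_eq]
  congr 1
  have hsplit : ∀ x : Fin n → Bool, ‖weightVector n k S f x‖ ^ 2 =
      ∑ w ∈ S, if wt x + k = w then ‖f w‖ ^ 2 else 0 := by
    intro x
    rw [sum_ite_eq]
    simp only [weightVector, PiLp.toLp_apply]
    split_ifs <;> simp
  simp_rw [hsplit]
  rw [Finset.sum_comm]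
  refine Finset.sum_congr rfl fun w _ => ?_
  rw [← sum_filter, sum_const, card_filter_wt_add_eq, nsmul_eq_mul, mul_comm]

lemma inner_weightVector_eq_zero {n k₁ k₂ : ℕ} {S₁ S₂ : Finset ℕ} (f g : ℕ → ℂ)
    (h : ∀ m, m + k₁ ∈ S₁ → m + k₂ ∉ S₂) :
    inner ℂ (weightVector n k₁ S₁ f) (weightVector n k₂ S₂ g) = 0 := by
  rw [PiLp.inner_apply]
  refine Finset.sum_eq_zero fun x _ => ?_
  simp only [weightVector, PiLp.toLp_apply]
  by_cases h₁ : wt x + k₁ ∈ S₁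
  · simp [h _ h₁]
  · simp [h₁]

lemma eq_of_add_mem_of_separated {S : Finset ℕ} {t k₁ k₂ m : ℕ}
    (hS : ∀ w₁ ∈ S, ∀ w₂ ∈ S, w₁ ≠ w₂ → (t : ℤ) < |(w₁ : ℤ) - (w₂ : ℤ)|)
    (hk₁ : k₁ ≤ t) (hk₂ : k₂ ≤ t) (h₁ : m + k₁ ∈ S) (h₂ : m + k₂ ∈ S) : k₁ = k₂ := by
  by_contra hne
  have hsep := hS _ h₁ _ h₂ (by omega)
  rw [lt_abs] at hsep
  push_cast at hsep
  omega

theorem orthogonality_Uk_general (N t : ℕ) (A B : Finset ℕ) (hAB : Disjoint A B)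
    (hD3 : ∀ w₁ ∈ A ∪ B, ∀ w₂ ∈ A ∪ B, w₁ ≠ w₂ → (t : ℤ) < |(w₁ : ℤ) - (w₂ : ℤ)|)
    (f : ℕ → ℂ)
    (hD2 : ∀ k ≤ t,
      (∑ w ∈ A, ‖f w‖ ^ 2 * (chooseZ (N - t) ((w : ℤ) - (k : ℤ)) : ℝ)) =
        (∑ w ∈ B, ‖f w‖ ^ 2 * (chooseZ (N - t) ((w : ℤ) - (k : ℤ)) : ℝ)) ∧
      (∑ w ∈ A, ‖f w‖ ^ 2 * (chooseZ (N - t) ((w : ℤ) - (k : ℤ)) : ℝ)) ≠ 0) :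
    let Uv : Fin 2 → ℕ → EuclideanSpace ℂ (Fin (N - t) → Bool) := fun b k => WithLp.toLp 2 fun x =>
      if wt x + k ∈ (if b = 0 then A else B) then f (wt x + k) else 0
    (∀ k ≤ t,
        (@inner ℂ _ _ (Uv 0 k) (Uv 0 k) = @inner ℂ _ _ (Uv 1 k) (Uv 1 k)) ∧
        @inner ℂ _ _ (Uv 0 k) (Uv 0 k) ≠ 0) ∧
    (∀ k₁ ≤ t, ∀ k₂ ≤ t, ∀ b₁ b₂ : Fin 2, (k₁, b₁) ≠ (k₂, b₂) →
        @inner ℂ _ _ (Uv b₁ k₁) (Uv b₂ k₂) = 0) := by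
  intro Uv
  set S : Fin 2 → Finset ℕ := fun b => if b = 0 then A else B
  have hUv : ∀ b k, Uv b k = weightVector (N - t) k (S b) f := fun _ _ => rfl
  have hS_sub : ∀ b, S b ⊆ A ∪ B := by
    intro b
    by_cases hb : b = 0 <;> simp [S, hb, subset_union_left, subset_union_right]
  have hS_disj : ∀ b₁ b₂, b₁ ≠ b₂ → Disjoint (S b₁) (S b₂) := by
    intro b₁ b₂ hb
    fin_cases b₁ <;> fin_cases b₂ <;> simp_all [S, hAB.symm]
  refine ⟨fun k hk => ?_, fun k₁ hk₁ k₂ hk₂ b₁ b₂ hne => ?_⟩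
  · obtain ⟨hnorm_eq, hnorm_ne⟩ := hD2 k hk
    simp only [hUv, inner_weightVector_self, S, if_pos rfl, if_neg one_ne_zero]
    exact ⟨by rw [hnorm_eq], by exact_mod_cast hnorm_ne⟩
  · rw [hUv, hUv]
    refine inner_weightVector_eq_zero f f fun m h₁ h₂ => ?_
    obtain rfl := eq_of_add_mem_of_separated hD3 hk₁ hk₂ (hS_sub b₁ h₁) (hS_sub b₂ h₂)
    have hb : b₁ ≠ b₂ := fun hb => hne (by rw [hb])
    exact disjoint_left.mp (hS_disj b₁ b₂ hb) h₁ h₂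

theorem orthogonality_Uk (N t : ℕ) (ht : 1 ≤ t) (htN : t < N) (A B : Finset ℕ)
    (hAsub : A ⊆ Finset.range (N + 1)) (hBsub : B ⊆ Finset.range (N + 1))
    (hA : A.Nonempty) (hB : B.Nonempty) (hAB : Disjoint A B)
    (hD3 : ∀ w₁ ∈ A ∪ B, ∀ w₂ ∈ A ∪ B, w₁ ≠ w₂ → (t : ℤ) < |(w₁ : ℤ) - (w₂ : ℤ)|)
    (f : ℕ → ℂ)
    (hD2 : ∀ k ≤ t,
      (∑ w ∈ A, ‖f w‖ ^ 2 * (chooseZ (N - t) ((w : ℤ) - (k : ℤ)) : ℝ)) =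
        (∑ w ∈ B, ‖f w‖ ^ 2 * (chooseZ (N - t) ((w : ℤ) - (k : ℤ)) : ℝ)) ∧
      (∑ w ∈ A, ‖f w‖ ^ 2 * (chooseZ (N - t) ((w : ℤ) - (k : ℤ)) : ℝ)) ≠ 0) :
    let Uv : Fin 2 → ℕ → EuclideanSpace ℂ (Fin (N - t) → Bool) := fun b k => WithLp.toLp 2 fun x =>
      if wt x + k ∈ (if b = 0 then A else B) then f (wt x + k) else 0
    (∀ k ≤ t,
        (@inner ℂ _ _ (Uv 0 k) (Uv 0 k) = @inner ℂ _ _ (Uv 1 k) (Uv 1 k)) ∧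
        @inner ℂ _ _ (Uv 0 k) (Uv 0 k) ≠ 0) ∧
    (∀ k₁ ≤ t, ∀ k₂ ≤ t, ∀ b₁ b₂ : Fin 2, (k₁, b₁) ≠ (k₂, b₂) →
        @inner ℂ _ _ (Uv b₁ k₁) (Uv b₂ k₂) = 0) :=
  orthogonality_Uk_general N t A B hAB hD3 f hD2
end
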